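/- Let f : ℝ^{p×q} → ℝ, λ > 0, and let X* be a minimizer of X ↦ f(X) + λ‖X‖_*. Let X* = P* Σ* Q*ᵀ be its compact SVD and set U* = P* √Σ*, V* = Q* √Σ* (possibly padded with zero columns and rotated by an orthogonal matrix R). Then for all U ∈ ℝ^{p×r}, V ∈ ℝ^{q×r}: f(U*V*ᵀ) + (λ/2)(‖U*‖_F² + ‖V*‖_F²) ≤ f(UVᵀ) + (λ/2)(‖U‖_F² + ‖V‖_F²). -/

import Mathlib

open Matrix

noncomputable def singularValues {m n : Type*} [Fintype m] [Fintype n] [DecidableEq n]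
    (X : Matrix m n ℝ) : n → ℝ :=
  fun i => Real.sqrt ((show (Xᵀ * X).IsHermitian by
    simpa using Matrix.isHermitian_conjTranspose_mul_self X).eigenvalues i)

noncomputable def nuclearNorm {m n : Type*} [Fintype m] [Fintype n] [DecidableEq n]
    (X : Matrix m n ℝ) : ℝ := ∑ i, singularValues X i

noncomputable def frobNorm {m n : Type*} [Fintype m] [Fintype n] (X : Matrix m n ℝ) : ℝ :=
  Real.sqrt ((Xᵀ * X).trace)

noncomputable def spectralNorm' {m n : Type*} [Fintype m] [Fintype n] [DecidableEq m] [DecidableEq n]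
    (X : Matrix m n ℝ) : ℝ :=
  ‖LinearMap.toContinuousLinearMap (Matrix.toEuclideanLin X)‖

noncomputable def smallestNonzeroSV {m n : Type*} [Fintype m] [Fintype n] [DecidableEq n]
    (X : Matrix m n ℝ) : ℝ :=
  sInf {s | (∃ i, singularValues X i = s) ∧ s ≠ 0}

noncomputable def distO {n r : ℕ} (W₁ W₂ : Matrix (Fin n) (Fin r) ℝ) : ℝ :=
  sInf {d | ∃ R : Matrix (Fin r) (Fin r) ℝ, Rᵀ * R = 1 ∧ d = frobNorm (W₁ - W₂ * R)}

attribute [local instance] Matrix.normedAddCommGroup Matrix.normedSpace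

/-! Write `F` for the padded block `[√S | 0]`, so that `F Fᵀ = S`. The point `U* = P F R`,
`V* = Q F R` multiplies back to `X*`, and `‖U*‖_F² = ‖V*‖_F² = tr S`.

Both remaining inequalities come from one estimate: if `P Pᵀ` and `Q Qᵀ` are orthogonal
projections, then `2 tr(Pᵀ A Bᵀ Q) ≤ ‖A‖_F² + ‖B‖_F²`, by AM–GM for the Frobenius inner product
together with the fact that projections shrink Frobenius norms. Taking `P, Q` from an SVD of
`A Bᵀ` gives `2 ‖A Bᵀ‖_* ≤ ‖A‖_F² + ‖B‖_F²`; taking `A, B` to be the balanced SVD factors of `X`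
gives `tr(Pᵀ X Q) ≤ ‖X‖_*`, and in particular `tr S ≤ ‖X*‖_*`. Chaining these with the optimality
of `X*` at `U Vᵀ` gives the inequality. -/

section

variable {m n k l : Type*} [Fintype m] [Fintype n] [Fintype k] [Fintype l]

theorem trace_transpose_mul_self_nonneg (M : Matrix m n ℝ) : 0 ≤ (Mᵀ * M).trace := by
  simpa using (posSemidef_conjTranspose_mul_self M).trace_nonneg

theorem frobNorm_sq (M : Matrix m n ℝ) : frobNorm M ^ 2 = (Mᵀ * M).trace :=
  Real.sq_sqrt (trace_transpose_mul_self_nonneg M)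

theorem two_mul_trace_mul_transpose_le (M N : Matrix m n ℝ) :
    2 * (M * Nᵀ).trace ≤ frobNorm M ^ 2 + frobNorm N ^ 2 := by
  have h := trace_transpose_mul_self_nonneg (M - N)
  have hMN : (Mᵀ * N).trace = (M * Nᵀ).trace := by
    rw [trace_mul_comm, ← trace_transpose, transpose_mul, transpose_transpose]
  rw [transpose_sub, Matrix.sub_mul, Matrix.mul_sub, Matrix.mul_sub, trace_sub, trace_sub,
    trace_sub, hMN, trace_mul_comm Nᵀ] at h
  rw [frobNorm_sq, frobNorm_sq]
  linarith

theorem frobNorm_transpose_mul_le [DecidableEq m] {P : Matrix m k ℝ}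
    (hP : IsIdempotentElem (P * Pᵀ)) (A : Matrix m n ℝ) : frobNorm (Pᵀ * A) ≤ frobNorm A := by
  have hcompl : (1 - P * Pᵀ)ᵀ * (1 - P * Pᵀ) = 1 - P * Pᵀ := by
    rw [transpose_sub, transpose_one, transpose_mul, transpose_transpose]
    exact hP.one_sub
  have hgram : ((1 - P * Pᵀ) * A)ᵀ * ((1 - P * Pᵀ) * A) = Aᵀ * A - (Pᵀ * A)ᵀ * (Pᵀ * A) := by
    rw [transpose_mul, Matrix.mul_assoc, ← Matrix.mul_assoc (1 - P * Pᵀ)ᵀ, hcompl, Matrix.sub_mul,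
      Matrix.one_mul, Matrix.mul_sub, transpose_mul, transpose_transpose, Matrix.mul_assoc,
      Matrix.mul_assoc]
  have h := trace_transpose_mul_self_nonneg ((1 - P * Pᵀ) * A)
  rw [hgram, trace_sub, sub_nonneg] at h
  exact Real.sqrt_le_sqrt h

theorem two_mul_trace_le_of_isIdempotentElem [DecidableEq m] [DecidableEq n]
    {P : Matrix m k ℝ} {Q : Matrix n k ℝ} (hP : IsIdempotentElem (P * Pᵀ))
    (hQ : IsIdempotentElem (Q * Qᵀ)) (A : Matrix m l ℝ) (B : Matrix n l ℝ) :
    2 * (Pᵀ * (A * Bᵀ) * Q).trace ≤ frobNorm A ^ 2 + frobNorm B ^ 2 := by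
  have hsplit : Pᵀ * (A * Bᵀ) * Q = (Pᵀ * A) * (Qᵀ * B)ᵀ := by
    simp only [transpose_mul, transpose_transpose, Matrix.mul_assoc]
  rw [hsplit]
  refine (two_mul_trace_mul_transpose_le _ _).trans (add_le_add ?_ ?_)
  · exact pow_le_pow_left₀ (Real.sqrt_nonneg _) (frobNorm_transpose_mul_le hP A) 2
  · exact pow_le_pow_left₀ (Real.sqrt_nonneg _) (frobNorm_transpose_mul_le hQ B) 2

theorem isIdempotentElem_mul_transpose [DecidableEq k] {P : Matrix m k ℝ} (hP : Pᵀ * P = 1) :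
    IsIdempotentElem (P * Pᵀ) := by
  rw [IsIdempotentElem, Matrix.mul_assoc, ← Matrix.mul_assoc Pᵀ, hP, Matrix.one_mul]

theorem frobNorm_mul_mul_sq [DecidableEq k] [DecidableEq l] {P : Matrix m k ℝ}
    (hP : Pᵀ * P = 1) {R : Matrix l l ℝ} (hR : Rᵀ * R = 1) (F : Matrix k l ℝ) :
    frobNorm (P * F * R) ^ 2 = (F * Fᵀ).trace := by
  have h : (P * F * R)ᵀ * (P * F * R) = Rᵀ * (Fᵀ * (Pᵀ * P) * F) * R := by
    simp only [transpose_mul, Matrix.mul_assoc]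
  rw [frobNorm_sq, h, hP, Matrix.mul_one, trace_mul_comm, ← Matrix.mul_assoc,
    mul_eq_one_comm.mp hR, Matrix.one_mul, trace_mul_comm]

theorem exists_mul_transpose_eq_one_and_eq_diagonal [DecidableEq n] (X : Matrix m n ℝ) :
    ∃ Z : Matrix n n ℝ, Z * Zᵀ = 1 ∧
      (X * Z)ᵀ * (X * Z) = diagonal fun i => singularValues X i ^ 2 := by
  have hA : (Xᵀ * X).IsHermitian := by simpa using isHermitian_conjTranspose_mul_self X
  have hZ := Unitary.coe_mul_star_self hA.eigenvectorUnitary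
  have h := hA.conjStarAlgAut_star_eigenvectorUnitary
  rw [Unitary.conjStarAlgAut_star_apply] at h
  simp only [star_eq_conjTranspose, conjTranspose_eq_transpose_of_trivial] at hZ h
  refine ⟨hA.eigenvectorUnitary, hZ, ?_⟩
  rw [transpose_mul, Matrix.mul_assoc, ← Matrix.mul_assoc Xᵀ, ← Matrix.mul_assoc, h]
  congr 1
  ext i
  exact (Real.sq_sqrt (eigenvalues_conjTranspose_mul_self_nonneg X i)).symm

theorem mul_diagonal_eq_self_of_transpose_mul_self_eq_diagonal [DecidableEq n]
    {Y : Matrix m n ℝ} {d c : n → ℝ} (hY : Yᵀ * Y = diagonal d) (hc : ∀ i, d i ≠ 0 → c i = 1) :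
    Y * diagonal c = Y := by
  have h : (Yᴴ * Y) * (diagonal c - 1) = 0 := by
    rw [conjTranspose_eq_transpose_of_trivial, hY, ← diagonal_one, diagonal_sub,
      diagonal_mul_diagonal, diagonal_eq_zero]
    ext i
    by_cases hi : d i = 0
    · simp [hi]
    · simp [hc i hi]
  rwa [conjTranspose_mul_self_mul_eq_zero, Matrix.mul_sub, Matrix.mul_one, sub_eq_zero] at h

theorem exists_nuclearNorm_eq_trace [DecidableEq n] (X : Matrix m n ℝ) :
    ∃ (W : Matrix m n ℝ) (Z : Matrix n n ℝ), IsIdempotentElem (W * Wᵀ) ∧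
      IsIdempotentElem (Z * Zᵀ) ∧ nuclearNorm X = (Wᵀ * X * Z).trace := by
  obtain ⟨Z, hZ, hXZ⟩ := exists_mul_transpose_eq_one_and_eq_diagonal X
  set σ := singularValues X
  -- Since `0⁻¹ = 0`, the diagonal of inverses is the pseudo-inverse of `diagonal σ`.
  set W := X * Z * diagonal fun i => (σ i)⁻¹
  have hWW : Wᵀ * W = diagonal fun i => (σ i)⁻¹ * (σ i ^ 2 * (σ i)⁻¹) := by
    rw [transpose_mul, Matrix.mul_assoc, ← Matrix.mul_assoc (X * Z)ᵀ, hXZ, diagonal_transpose,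
      diagonal_mul_diagonal, diagonal_mul_diagonal]
  refine ⟨W, Z, ?_, by rw [hZ]; exact IsIdempotentElem.one, ?_⟩
  · have hW : W * (Wᵀ * W) = W := by
      refine hWW ▸ mul_diagonal_eq_self_of_transpose_mul_self_eq_diagonal hWW fun i hi => ?_
      have hσ : σ i ≠ 0 := by rintro h; simp [h] at hi
      field_simp
    rw [IsIdempotentElem, Matrix.mul_assoc, ← Matrix.mul_assoc Wᵀ, ← Matrix.mul_assoc W, hW]
  · have h : Wᵀ * X * Z = (diagonal fun i => (σ i)⁻¹) * ((X * Z)ᵀ * (X * Z)) := by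
      simp only [W, transpose_mul, diagonal_transpose, Matrix.mul_assoc]
    rw [h, hXZ, diagonal_mul_diagonal, trace_diagonal]
    exact Finset.sum_congr rfl fun i _ => by rw [sq, ← mul_assoc, inv_mul_mul_self]

theorem exists_mul_transpose_eq_and_frobNorm_sq_eq_nuclearNorm [DecidableEq n]
    (X : Matrix m n ℝ) : ∃ (A : Matrix m n ℝ) (B : Matrix n n ℝ), X = A * Bᵀ ∧
      frobNorm A ^ 2 = nuclearNorm X ∧ frobNorm B ^ 2 = nuclearNorm X := by
  obtain ⟨Z, hZ, hXZ⟩ := exists_mul_transpose_eq_one_and_eq_diagonal X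
  set σ := singularValues X
  set τ := fun i => Real.sqrt (σ i)
  have hσ : ∀ i, 0 ≤ σ i := fun i => Real.sqrt_nonneg _
  refine ⟨X * Z * diagonal τ⁻¹, Z * diagonal τ, ?_, ?_, ?_⟩
  · have hτ : (diagonal τ⁻¹ : Matrix n n ℝ) * (diagonal τ)ᵀ = diagonal fun i => (τ i)⁻¹ * τ i := by
      rw [diagonal_transpose, diagonal_mul_diagonal]
      rfl
    rw [transpose_mul, Matrix.mul_assoc, ← Matrix.mul_assoc (diagonal τ⁻¹), hτ,
      ← Matrix.mul_assoc, mul_diagonal_eq_self_of_transpose_mul_self_eq_diagonal hXZ,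
      Matrix.mul_assoc, hZ, Matrix.mul_one]
    intro i hi
    refine inv_mul_cancel₀ fun hτ0 => hi ?_
    rw [Real.sqrt_eq_zero (hσ i)] at hτ0
    simp [hτ0]
  · rw [frobNorm_sq, transpose_mul, Matrix.mul_assoc, ← Matrix.mul_assoc (X * Z)ᵀ, hXZ,
      diagonal_transpose, diagonal_mul_diagonal, diagonal_mul_diagonal, trace_diagonal]
    refine Finset.sum_congr rfl fun i _ => ?_
    have hτσ : τ i ^ 2 = σ i := Real.sq_sqrt (hσ i)
    change (τ i)⁻¹ * (σ i ^ 2 * (τ i)⁻¹) = σ i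
    rw [← hτσ]
    rcases eq_or_ne (τ i) 0 with h | h
    · simp [h]
    · field_simp
  · rw [frobNorm_sq, transpose_mul, Matrix.mul_assoc, ← Matrix.mul_assoc Zᵀ,
      mul_eq_one_comm.mp hZ, Matrix.one_mul, diagonal_transpose, diagonal_mul_diagonal,
      trace_diagonal]
    exact Finset.sum_congr rfl fun i _ => Real.mul_self_sqrt (hσ i)

theorem two_mul_nuclearNorm_mul_transpose_le [DecidableEq m] [DecidableEq n]
    (A : Matrix m l ℝ) (B : Matrix n l ℝ) :
    2 * nuclearNorm (A * Bᵀ) ≤ frobNorm A ^ 2 + frobNorm B ^ 2 := by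
  obtain ⟨W, Z, hW, hZ, h⟩ := exists_nuclearNorm_eq_trace (A * Bᵀ)
  exact h ▸ two_mul_trace_le_of_isIdempotentElem hW hZ A B

theorem trace_transpose_mul_mul_le_nuclearNorm [DecidableEq m] [DecidableEq n]
    {P : Matrix m k ℝ} {Q : Matrix n k ℝ} (hP : IsIdempotentElem (P * Pᵀ))
    (hQ : IsIdempotentElem (Q * Qᵀ)) (X : Matrix m n ℝ) : (Pᵀ * X * Q).trace ≤ nuclearNorm X := by
  obtain ⟨A, B, rfl, hA, hB⟩ := exists_mul_transpose_eq_and_frobNorm_sq_eq_nuclearNorm X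
  linarith [two_mul_trace_le_of_isIdempotentElem hP hQ A B]

theorem fromCols_map_sqrt_mul_transpose [DecidableEq k] {S : Matrix k k ℝ} (hS : S.IsDiag)
    (hS₀ : ∀ i, 0 ≤ S i i) :
    fromCols (S.map Real.sqrt) (0 : Matrix k l ℝ) *
      (fromCols (S.map Real.sqrt) (0 : Matrix k l ℝ))ᵀ = S := by
  conv_lhs => rw [← hS.diagonal_diag]
  rw [diagonal_map Real.sqrt_zero, transpose_fromCols, Matrix.fromCols_mul_fromRows, transpose_zero,
    Matrix.mul_zero, add_zero, diagonal_transpose, diagonal_mul_diagonal]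
  conv_rhs => rw [← hS.diagonal_diag]
  exact congrArg diagonal (funext fun i => Real.mul_self_sqrt (hS₀ i))

end

theorem stmt7 {p q r k : ℕ} (f : Matrix (Fin p) (Fin q) ℝ → ℝ) (l : ℝ) (hl : 0 < l)
    (Xs : Matrix (Fin p) (Fin q) ℝ)
    (hopt : ∀ Y, f Xs + l * nuclearNorm Xs ≤ f Y + l * nuclearNorm Y)
    (P : Matrix (Fin p) (Fin r) ℝ) (Q : Matrix (Fin q) (Fin r) ℝ)
    (S : Matrix (Fin r) (Fin r) ℝ)
    (hP : Pᵀ * P = 1) (hQ : Qᵀ * Q = 1)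
    (hdiag : ∀ i j, i ≠ j → S i j = 0) (hpos : ∀ i, 0 < S i i)
    (hX : Xs = P * S * Qᵀ)
    (R : Matrix (Fin r ⊕ Fin k) (Fin r ⊕ Fin k) ℝ) (hR : Rᵀ * R = 1) :
    ∀ (U : Matrix (Fin p) (Fin r ⊕ Fin k) ℝ) (V : Matrix (Fin q) (Fin r ⊕ Fin k) ℝ),
      f ((P * fromCols (S.map Real.sqrt) (0 : Matrix (Fin r) (Fin k) ℝ) * R) * (Q * fromCols (S.map Real.sqrt) (0 : Matrix (Fin r) (Fin k) ℝ) * R)ᵀ)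
        + l / 2 * (frobNorm (P * fromCols (S.map Real.sqrt) (0 : Matrix (Fin r) (Fin k) ℝ) * R) ^ 2
            + frobNorm (Q * fromCols (S.map Real.sqrt) (0 : Matrix (Fin r) (Fin k) ℝ) * R) ^ 2)
      ≤ f (U * Vᵀ) + l / 2 * (frobNorm U ^ 2 + frobNorm V ^ 2) := by
  intro U V
  set F := fromCols (S.map Real.sqrt) (0 : Matrix (Fin r) (Fin k) ℝ)
  have hF : F * Fᵀ = S :=
    fromCols_map_sqrt_mul_transpose (fun i j => hdiag i j) fun i => (hpos i).le
  have hXs : (P * F * R) * (Q * F * R)ᵀ = Xs := by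
    rw [hX, ← hF]
    simp only [transpose_mul, Matrix.mul_assoc]
    rw [← Matrix.mul_assoc R, mul_eq_one_comm.mp hR, Matrix.one_mul]
  have hSX : S.trace ≤ nuclearNorm Xs := by
    have hS : Pᵀ * Xs * Q = S := by
      rw [hX, show Pᵀ * (P * S * Qᵀ) * Q = (Pᵀ * P) * S * (Qᵀ * Q) by
        simp only [Matrix.mul_assoc], hP, hQ, Matrix.one_mul, Matrix.mul_one]
    exact hS ▸ trace_transpose_mul_mul_le_nuclearNorm (isIdempotentElem_mul_transpose hP)
      (isIdempotentElem_mul_transpose hQ) Xs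
  have hUV := two_mul_nuclearNorm_mul_transpose_le U V
  rw [hXs, frobNorm_mul_mul_sq hP hR, frobNorm_mul_mul_sq hQ hR, hF]
  linarith [hopt (U * Vᵀ), mul_le_mul_of_nonneg_left hSX hl.le,
    mul_le_mul_of_nonneg_left hUV hl.le]
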